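/- arXiv:math/0702482 — 2 statements merged into one kernel-verified Lean document; each statement's English description precedes it below -/
import Mathlib

section
/- Let n ≥ 4, suppose Assumption(n-1) holds, and let T be an irreducible finite-dimensional representation of U'_q(so_n). Then the restriction of T to U'_q(so_{n-1}) is completely reducible, and in its decomposition into irreducible subrepresentations either every summand is equivalent to a classical-type representation T_{m_{n-1}}, or every summand is equivalent to a nonclassical-type representation T_{ε,m_{n-1}}. -/
noncomputable section

open scoped Classical
open Finset

namespace UqSO

/-! ## q-numbers.  Arguments are *doubled* half-integers: `qnum q s t` is the
q-number `[t/2]` and `qnumP q s t` is `[t/2]₊`, computed via the fixed square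
root `s` of `q` (so `q^(t/2) = s^t`). -/

def qnum (q s : ℂ) (t : ℤ) : ℂ := (s ^ t - s ^ (-t)) / (q - q⁻¹)

def qnumP (q s : ℂ) (t : ℤ) : ℂ := (s ^ t + s ^ (-t)) / (q - q⁻¹)

/-! ## The algebra `U'_q(so_n)`.
It is generated by `I_{21}, I_{32}, …, I_{n,n-1}`; the generator `gen q n i`
(for `i : Fin (n-1)`) corresponds to `I_{i+2,i+1}`. -/

inductive Rel (q : ℂ) (n : ℕ) :
    FreeAlgebra ℂ (Fin (n - 1)) → FreeAlgebra ℂ (Fin (n - 1)) → Prop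
  | rel1 (i j : Fin (n - 1)) (h : (j : ℕ) = (i : ℕ) + 1) :
      Rel q n
        (FreeAlgebra.ι ℂ i * FreeAlgebra.ι ℂ i * FreeAlgebra.ι ℂ j -
            (q + q⁻¹) • (FreeAlgebra.ι ℂ i * FreeAlgebra.ι ℂ j * FreeAlgebra.ι ℂ i) +
          FreeAlgebra.ι ℂ j * (FreeAlgebra.ι ℂ i * FreeAlgebra.ι ℂ i))
        (-FreeAlgebra.ι ℂ j)
  | rel2 (i j : Fin (n - 1)) (h : (j : ℕ) = (i : ℕ) + 1) :
      Rel q n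
        (FreeAlgebra.ι ℂ i * (FreeAlgebra.ι ℂ j * FreeAlgebra.ι ℂ j) -
            (q + q⁻¹) • (FreeAlgebra.ι ℂ j * FreeAlgebra.ι ℂ i * FreeAlgebra.ι ℂ j) +
          FreeAlgebra.ι ℂ j * FreeAlgebra.ι ℂ j * FreeAlgebra.ι ℂ i)
        (-FreeAlgebra.ι ℂ i)
  | relFar (i j : Fin (n - 1)) (h : (i : ℕ) + 1 < (j : ℕ)) :
      Rel q n (FreeAlgebra.ι ℂ i * FreeAlgebra.ι ℂ j)
        (FreeAlgebra.ι ℂ j * FreeAlgebra.ι ℂ i)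

abbrev Alg (q : ℂ) (n : ℕ) := RingQuot (Rel q n)

def gen (q : ℂ) (n : ℕ) (i : Fin (n - 1)) : Alg q n :=
  RingQuot.mkAlgHom ℂ (Rel q n) (FreeAlgebra.ι ℂ i)

/-- The canonical inclusion `U'_q(so_m) → U'_q(so_n)` for `m ≤ n`, sending
`I_{i+2,i+1}` to `I_{i+2,i+1}`.  Its image is the subalgebra generated by
`I_{21}, …, I_{m,m-1}`. -/
def incl (q : ℂ) {m n : ℕ} (h : m ≤ n) : Alg q m →ₐ[ℂ] Alg q n :=
  RingQuot.liftAlgHom ℂ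
    ⟨(RingQuot.mkAlgHom ℂ (Rel q n)).comp
        (FreeAlgebra.lift ℂ fun i =>
          FreeAlgebra.ι ℂ (Fin.castLE (Nat.sub_le_sub_right h 1) i)),
      by
        intro x y hxy
        induction hxy with
        | rel1 i j hij =>
            have hr := RingQuot.mkAlgHom_rel ℂ
              (Rel.rel1 (q := q) (n := n) (Fin.castLE (Nat.sub_le_sub_right h 1) i)
                (Fin.castLE (Nat.sub_le_sub_right h 1) j) (by simpa using hij))
            simpa using hr
        | rel2 i j hij =>
            have hr := RingQuot.mkAlgHom_rel ℂ
              (Rel.rel2 (q := q) (n := n) (Fin.castLE (Nat.sub_le_sub_right h 1) i)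
                (Fin.castLE (Nat.sub_le_sub_right h 1) j) (by simpa using hij))
            simpa using hr
        | relFar i j hij =>
            have hr := RingQuot.mkAlgHom_rel ℂ
              (Rel.relFar (q := q) (n := n) (Fin.castLE (Nat.sub_le_sub_right h 1) i)
                (Fin.castLE (Nat.sub_le_sub_right h 1) j) (by simpa using hij))
            simpa using hr⟩

/-! ## Gelfand–Tsetlin patterns.
A pattern has rows `s = 0, 1, …, n`; row `s` has `⌊s/2⌋` entries.  All entries
are *doubled* half-integers (i.e. twice their actual value, stored in `ℤ`). -/

def Pattern (n : ℕ) : Type := ∀ s : Fin (n + 1), Fin ((s : ℕ) / 2) → ℤ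

/-- `ent t s j` is the (doubled) entry `m_{j+1,s}` of the pattern `t`
(with junk value `0` out of range). -/
def ent {n : ℕ} (t : Pattern n) (s j : ℕ) : ℤ :=
  if h : s < n + 1 ∧ j < s / 2 then t ⟨s, h.1⟩ ⟨j, h.2⟩ else 0

/-- Doubled `l`-coordinates: `lc t (2p+1) j = 2*l_{j+1,2p+1}`, `lc t (2p) j = 2*l_{j+1,2p}`
where `l_{j,2p+1} = m_{j,2p+1} + p - j + 1`, `l_{j,2p} = m_{j,2p} + p - j`. -/
def lc {n : ℕ} (t : Pattern n) (s j : ℕ) : ℤ :=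
  ent t s j + (if s % 2 = 1 then (s : ℤ) + 1 else (s : ℤ)) - 2 * ((j : ℤ) + 1)

/-- Change the entry `m_{j+1,s}` of the pattern by `d` (doubled). -/
def modify {n : ℕ} (t : Pattern n) (s j : ℕ) (d : ℤ) : Pattern n :=
  fun s' j' => if (s' : ℕ) = s ∧ (j' : ℕ) = j then t s' j' + d else t s' j'

/-- Classical-type Gelfand–Tsetlin tableaux with top row `m`:
top row condition, integrality (all rows integral or all half-odd-integral,
as the top row), and the betweenness conditions. -/
def IsGTc (n : ℕ) (m : Fin (n / 2) → ℤ) (t : Pattern n) : Prop :=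
  (∀ j : Fin (n / 2), ent t n (j : ℕ) = m j) ∧
  (∀ s j : ℕ, 2 ≤ s → s ≤ n → j < s / 2 → (Even (ent t s j) ↔ Even (ent t n 0))) ∧
  (∀ p : ℕ, 1 ≤ p → 2 * p + 1 ≤ n →
    (∀ j : ℕ, j < p → ent t (2 * p) j ≤ ent t (2 * p + 1) j) ∧
    (∀ j : ℕ, j + 1 < p → ent t (2 * p + 1) (j + 1) ≤ ent t (2 * p) j) ∧
    -ent t (2 * p + 1) (p - 1) ≤ ent t (2 * p) (p - 1)) ∧
  (∀ p : ℕ, 2 ≤ p → 2 * p ≤ n →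
    (∀ j : ℕ, j + 1 < p →
      ent t (2 * p - 1) j ≤ ent t (2 * p) j ∧ ent t (2 * p) (j + 1) ≤ ent t (2 * p - 1) j) ∧
    -ent t (2 * p) (p - 1) ≤ ent t (2 * p - 1) (p - 2))

/-- Nonclassical-type tableaux with top row `m`: all entries half-odd-integral
and the betweenness conditions with lower bound `1/2`. -/
def IsGTn (n : ℕ) (m : Fin (n / 2) → ℤ) (t : Pattern n) : Prop :=
  (∀ j : Fin (n / 2), ent t n (j : ℕ) = m j) ∧
  (∀ s j : ℕ, 2 ≤ s → s ≤ n → j < s / 2 → Odd (ent t s j)) ∧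
  (∀ p : ℕ, 1 ≤ p → 2 * p + 1 ≤ n →
    (∀ j : ℕ, j < p → ent t (2 * p) j ≤ ent t (2 * p + 1) j) ∧
    (∀ j : ℕ, j + 1 < p → ent t (2 * p + 1) (j + 1) ≤ ent t (2 * p) j) ∧
    1 ≤ ent t (2 * p) (p - 1)) ∧
  (∀ p : ℕ, 2 ≤ p → 2 * p ≤ n →
    ∀ j : ℕ, j + 1 < p →
      ent t (2 * p - 1) j ≤ ent t (2 * p) j ∧ ent t (2 * p) (j + 1) ≤ ent t (2 * p - 1) j)

def GTc (n : ℕ) (m : Fin (n / 2) → ℤ) : Type := { t : Pattern n // IsGTc n m t }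

def GTn (n : ℕ) (m : Fin (n / 2) → ℤ) : Type := { t : Pattern n // IsGTn n m t }

/-! ## The coefficients of the explicit formulas. -/

section Coeffs

variable (q s : ℂ) {n : ℕ}

/-- `A^j_{2p}(α)` (here `j` is 0-indexed). -/
def Acoef (t : Pattern n) (p j : ℕ) : ℂ :=
  ((((∏ i ∈ range p,
        qnum q s (lc t (2*p+1) i + lc t (2*p) j) *
          qnum q s (lc t (2*p+1) i - lc t (2*p) j - 2)) *
       ∏ i ∈ range (p-1),
        qnum q s (lc t (2*p-1) i + lc t (2*p) j) *
          qnum q s (lc t (2*p-1) i - lc t (2*p) j - 2)) /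
     ∏ i ∈ (range p).erase j,
        qnum q s (lc t (2*p) i + lc t (2*p) j) * qnum q s (lc t (2*p) i - lc t (2*p) j) *
          qnum q s (lc t (2*p) i + lc t (2*p) j + 2) *
          qnum q s (lc t (2*p) i - lc t (2*p) j - 2)) : ℂ) ^ ((1:ℂ)/2)

/-- `B^j_{2p-1}(α)` (here `j` is 0-indexed). -/
def Bcoef (t : Pattern n) (p j : ℕ) : ℂ :=
  ((((∏ i ∈ range p,
        qnum q s (lc t (2*p) i + lc t (2*p-1) j) * qnum q s (lc t (2*p) i - lc t (2*p-1) j)) *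
       ∏ i ∈ range (p-1),
        qnum q s (lc t (2*p-2) i + lc t (2*p-1) j) *
          qnum q s (lc t (2*p-2) i - lc t (2*p-1) j)) /
     ∏ i ∈ (range (p-1)).erase j,
        qnum q s (lc t (2*p-1) i + lc t (2*p-1) j) * qnum q s (lc t (2*p-1) i - lc t (2*p-1) j) *
          qnum q s (lc t (2*p-1) i + lc t (2*p-1) j - 2) *
          qnum q s (lc t (2*p-1) i - lc t (2*p-1) j - 2)) : ℂ) ^ ((1:ℂ)/2)

/-- `C_{2p-1}(α)`. -/
def Ccoef (t : Pattern n) (p : ℕ) : ℂ :=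
  ((∏ i ∈ range p, qnum q s (lc t (2*p) i)) * ∏ i ∈ range (p-1), qnum q s (lc t (2*p-2) i)) /
    ∏ i ∈ range (p-1), qnum q s (lc t (2*p-1) i) * qnum q s (lc t (2*p-1) i - 2)

/-- `Ĉ_{2p-1}(α)`. -/
def ChatCoef (t : Pattern n) (p : ℕ) : ℂ :=
  ((∏ i ∈ range p, qnumP q s (lc t (2*p) i)) * ∏ i ∈ range (p-1), qnumP q s (lc t (2*p-2) i)) /
    ∏ i ∈ range (p-1), qnumP q s (lc t (2*p-1) i) * qnumP q s (lc t (2*p-1) i - 2)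

/-- `D_{2p}(α)`. -/
def Dcoef (t : Pattern n) (p : ℕ) : ℂ :=
  ((∏ i ∈ range p, qnum q s (lc t (2*p+1) i - 1)) *
      ∏ i ∈ range (p-1), qnum q s (lc t (2*p-1) i - 1)) /
    ∏ i ∈ range (p-1), qnum q s (lc t (2*p) i + 1) * qnum q s (lc t (2*p) i - 1)

/-- `a(l) = ((q^{l+1}+q^{-l-1})(q^{l}+q^{-l}))^{1/2}` (doubled argument). -/
def aval (L : ℤ) : ℂ := ((s ^ (L+2) + s ^ (-(L+2))) * (s ^ L + s ^ (-L))) ^ ((1:ℂ)/2)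

/-- `a'(l) = ((q^{l+1}-q^{-l-1})(q^{l}-q^{-l}))^{1/2}` (doubled argument). -/
def a'val (L : ℤ) : ℂ := ((s ^ (L+2) - s ^ (-(L+2))) * (s ^ L - s ^ (-L))) ^ ((1:ℂ)/2)

/-- `b(l) = ([2l+1][2l-1])^{1/2}` (doubled argument). -/
def bval (L : ℤ) : ℂ := (qnum q s (2*L+2) * qnum q s (2*L-2)) ^ ((1:ℂ)/2)

end Coeffs

/-! ## The explicit model operators. -/

section Ops

variable (q s : ℂ) {n : ℕ} {m : Fin (n / 2) → ℤ}

/-- A single raising/lowering term: the basis vector of the modified tableau with the given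
coefficient, the term being omitted if the modified tableau is inadmissible. -/
def ctermC (t' : Pattern n) (c : ℂ) : GTc n m →₀ ℂ :=
  if h : IsGTc n m t' then Finsupp.single ⟨t', h⟩ c else 0

def ntermC (t' : Pattern n) (c : ℂ) : GTn n m →₀ ℂ :=
  if h : IsGTn n m t' then Finsupp.single ⟨t', h⟩ c else 0

/-- Action of `I_{2p+1,2p}` on a classical-type basis vector (formula (8)). -/
def actOddC (p : ℕ) (α : GTc n m) : GTc n m →₀ ℂ :=
  (∑ j ∈ range p,
      ctermC (modify α.1 (2*p) j 2) (Acoef q s α.1 p j / aval s (lc α.1 (2*p) j))) -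
    ∑ j ∈ range p,
      ctermC (modify α.1 (2*p) j (-2))
        (Acoef q s (modify α.1 (2*p) j (-2)) p j / aval s (lc α.1 (2*p) j - 2))

/-- Action of `I_{2p,2p-1}` on a classical-type basis vector (formula (9)). -/
def actEvenC (p : ℕ) (α : GTc n m) : GTc n m →₀ ℂ :=
  ((∑ j ∈ range (p-1),
      ctermC (modify α.1 (2*p-1) j 2)
        (Bcoef q s α.1 p j / (bval q s (lc α.1 (2*p-1) j) * qnum q s (lc α.1 (2*p-1) j)))) -
    ∑ j ∈ range (p-1),
      ctermC (modify α.1 (2*p-1) j (-2))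
        (Bcoef q s (modify α.1 (2*p-1) j (-2)) p j /
          (bval q s (lc α.1 (2*p-1) j - 2) * qnum q s (lc α.1 (2*p-1) j - 2)))) +
    Finsupp.single α (Complex.I * Ccoef q s α.1 p)

/-- The operator of the classical-type representation `T_{m}` corresponding to the
generator `I_{g+2,g+1}`. -/
def classicalOp (n : ℕ) (m : Fin (n / 2) → ℤ) (g : Fin (n - 1)) :
    (GTc n m →₀ ℂ) →ₗ[ℂ] GTc n m →₀ ℂ :=
  Finsupp.lift _ ℂ _ fun α =>
    if (g : ℕ) % 2 = 1 then actOddC q s (((g : ℕ) + 1) / 2) α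
    else actEvenC q s (((g : ℕ) + 2) / 2) α

/-- Action of `I_{2p+1,2p}` on a nonclassical-type basis vector (formula (14));
`e` is the sign `ε_{2p+1}`. -/
def actOddN (e : ℂ) (p : ℕ) (α : GTn n m) : GTn n m →₀ ℂ :=
  Finsupp.single α
      (if ent α.1 (2*p) (p-1) = 1 then e / (s - s⁻¹) * Dcoef q s α.1 p else 0) +
    ((∑ j ∈ range p,
        ntermC (modify α.1 (2*p) j 2) (Acoef q s α.1 p j / a'val s (lc α.1 (2*p) j))) -
      ∑ j ∈ range p,
        ntermC (modify α.1 (2*p) j (-2))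
          (Acoef q s (modify α.1 (2*p) j (-2)) p j / a'val s (lc α.1 (2*p) j - 2)))

/-- Action of `I_{2p,2p-1}` on a nonclassical-type basis vector (formula (15));
`e` is the sign `ε_{2p}`. -/
def actEvenN (e : ℂ) (p : ℕ) (α : GTn n m) : GTn n m →₀ ℂ :=
  ((∑ j ∈ range (p-1),
      ntermC (modify α.1 (2*p-1) j 2)
        (Bcoef q s α.1 p j / (bval q s (lc α.1 (2*p-1) j) * qnumP q s (lc α.1 (2*p-1) j)))) -
    ∑ j ∈ range (p-1),
      ntermC (modify α.1 (2*p-1) j (-2))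
        (Bcoef q s (modify α.1 (2*p-1) j (-2)) p j /
          (bval q s (lc α.1 (2*p-1) j - 2) * qnumP q s (lc α.1 (2*p-1) j - 2)))) +
    Finsupp.single α (e * ChatCoef q s α.1 p)

/-- The operator of the nonclassical-type representation `T_{ε,m}` corresponding to the
generator `I_{g+2,g+1}`; here `ε i` is the sign `ε_{i+2}`. -/
def nonclassicalOp (n : ℕ) (ε : Fin (n - 1) → ℂ) (m : Fin (n / 2) → ℤ) (g : Fin (n - 1)) :
    (GTn n m →₀ ℂ) →ₗ[ℂ] GTn n m →₀ ℂ :=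
  Finsupp.lift _ ℂ _ fun α =>
    if (g : ℕ) % 2 = 1 then actOddN q s (ε g) (((g : ℕ) + 1) / 2) α
    else actEvenN q s (ε g) (((g : ℕ) + 2) / 2) α

end Ops

/-! ## Admissible weights and signs. -/

/-- Admissible classical-type highest weight for `U'_q(so_n)` (doubled entries). -/
def ClassicalWeight (n : ℕ) (m : Fin (n / 2) → ℤ) : Prop :=
  ((∀ i, Even (m i)) ∨ (∀ i, Odd (m i))) ∧
  (∀ i j : Fin (n / 2), i ≤ j → m j ≤ m i) ∧
  (n % 2 = 1 → ∀ i, 0 ≤ m i) ∧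
  (n % 2 = 0 → ∀ i : Fin (n / 2), ∀ _h : (i : ℕ) + 1 < n / 2,
    -m ⟨n / 2 - 1, by omega⟩ ≤ m i)

/-- Admissible nonclassical-type highest weight (doubled entries; all entries are
half-odd-integral, decreasing, and `≥ 1/2`). -/
def NonclassicalWeight (n : ℕ) (m : Fin (n / 2) → ℤ) : Prop :=
  (∀ i, Odd (m i)) ∧ (∀ i j : Fin (n / 2), i ≤ j → m j ≤ m i) ∧ ∀ i, 1 ≤ m i

def IsSign {k : ℕ} (ε : Fin k → ℂ) : Prop := ∀ i, ε i = 1 ∨ ε i = -1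

/-! ## Representations. -/

section Reps

variable {q : ℂ} {n : ℕ}

/-- A submodule invariant under a representation. -/
def Invariant {V : Type} [AddCommGroup V] [Module ℂ V]
    (T : Alg q n →ₐ[ℂ] Module.End ℂ V) (W : Submodule ℂ V) : Prop :=
  ∀ a : Alg q n, ∀ v ∈ W, T a v ∈ W

/-- Irreducibility (on a nonzero space). -/
def Irr {V : Type} [AddCommGroup V] [Module ℂ V]
    (T : Alg q n →ₐ[ℂ] Module.End ℂ V) : Prop :=
  ∀ W : Submodule ℂ V, Invariant T W → W = ⊥ ∨ W = ⊤

/-- `W` is an invariant subspace on which an irreducible subrepresentation is realized. -/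
def IsIrredSub {V : Type} [AddCommGroup V] [Module ℂ V]
    (T : Alg q n →ₐ[ℂ] Module.End ℂ V) (W : Submodule ℂ V) : Prop :=
  Invariant T W ∧ W ≠ ⊥ ∧
    ∀ U : Submodule ℂ V, U ≤ W → Invariant T U → U = ⊥ ∨ U = W

/-- `W` is a decomposition of the representation space as a direct sum of invariant
subspaces on each of which an irreducible representation is realized. -/
def IsDecomp {V : Type} [AddCommGroup V] [Module ℂ V]
    (T : Alg q n →ₐ[ℂ] Module.End ℂ V) {ι : Type} (W : ι → Submodule ℂ V) : Prop :=
  (∀ i, IsIrredSub T (W i)) ∧ iSupIndep W ∧ ⨆ i, W i = ⊤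

/-- Complete reducibility. -/
def CompRed {V : Type} [AddCommGroup V] [Module ℂ V]
    (T : Alg q n →ₐ[ℂ] Module.End ℂ V) : Prop :=
  ∃ (ι : Type) (W : ι → Submodule ℂ V), IsDecomp T W

/-- The subrepresentation on an invariant subspace. -/
def subRep {V : Type} [AddCommGroup V] [Module ℂ V] (T : Alg q n →ₐ[ℂ] Module.End ℂ V)
    (W : Submodule ℂ V) (hW : Invariant T W) : Alg q n →ₐ[ℂ] Module.End ℂ W where
  toFun a := (T a).restrict (q := W) fun v hv => hW a v hv
  map_one' := by
    ext v
    simp [LinearMap.restrict_apply]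
  map_mul' a b := by
    ext v
    simp [LinearMap.restrict_apply, map_mul, Module.End.mul_apply]
  map_zero' := by
    ext v
    simp [LinearMap.restrict_apply]
  map_add' a b := by
    ext v
    simp [LinearMap.restrict_apply, map_add, LinearMap.add_apply]
  commutes' c := by
    ext v
    simp [LinearMap.restrict_apply, Module.algebraMap_end_apply]

/-- Equivalence of two representations (of the same algebra, on possibly different spaces). -/
def RepEquiv {V W : Type} [AddCommGroup V] [Module ℂ V] [AddCommGroup W] [Module ℂ W]
    (T : Alg q n →ₐ[ℂ] Module.End ℂ V) (S : Alg q n →ₐ[ℂ] Module.End ℂ W) : Prop :=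
  ∃ e : V ≃ₗ[ℂ] W, ∀ (a : Alg q n) (v : V), e (T a v) = S a (e v)

end Reps

/-- `T` is equivalent to the classical-type representation `T_m`:
there is a linear isomorphism with the Gelfand–Tsetlin model intertwining all the
generators (hence the whole algebra). -/
def IsClassicalModel (q s : ℂ) {n : ℕ} {V : Type} [AddCommGroup V] [Module ℂ V]
    (T : Alg q n →ₐ[ℂ] Module.End ℂ V) (m : Fin (n / 2) → ℤ) : Prop :=
  ∃ e : V ≃ₗ[ℂ] (GTc n m →₀ ℂ), ∀ (g : Fin (n - 1)) (v : V),
    e (T (gen q n g) v) = classicalOp q s n m g (e v)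

/-- `T` is equivalent to the nonclassical-type representation `T_{ε,m}`. -/
def IsNonclassicalModel (q s : ℂ) {n : ℕ} {V : Type} [AddCommGroup V] [Module ℂ V]
    (T : Alg q n →ₐ[ℂ] Module.End ℂ V) (ε : Fin (n - 1) → ℂ) (m : Fin (n / 2) → ℤ) : Prop :=
  ∃ e : V ≃ₗ[ℂ] (GTn n m →₀ ℂ), ∀ (g : Fin (n - 1)) (v : V),
    e (T (gen q n g) v) = nonclassicalOp q s n ε m g (e v)

/-- A finite-dimensional representation of `U'_q(so_n)` on a nonzero space. -/
structure Rep (q : ℂ) (n : ℕ) where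
  V : Type
  [addCommGroup : AddCommGroup V]
  [module : Module ℂ V]
  [finite : FiniteDimensional ℂ V]
  [nontrivial : Nontrivial V]
  T : Alg q n →ₐ[ℂ] Module.End ℂ V

attribute [instance] Rep.addCommGroup Rep.module Rep.finite Rep.nontrivial

/-- The restriction of a representation to the subalgebra `U'_q(so_m)`, `m ≤ n`. -/
def Rep.res {q : ℂ} {n : ℕ} (R : Rep q n) {m : ℕ} (hm : m ≤ n) :
    Alg q m →ₐ[ℂ] Module.End ℂ R.V :=
  R.T.comp (incl q hm)

/-- `c` is an eigenvalue of the endomorphism `f`. -/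
def HasEig {V : Type} [AddCommGroup V] [Module ℂ V] (f : Module.End ℂ V) (c : ℂ) : Prop :=
  ∃ v : V, v ≠ 0 ∧ f v = c • v

/-- An eigenvalue of the classical type: `i·[m]` with `m ∈ (1/2)ℤ`. -/
def ClassicalEig (q s c : ℂ) : Prop := ∃ t : ℤ, c = Complex.I * qnum q s t

/-- An eigenvalue of the nonclassical type: `[m]₊` with `m ∈ ℤ + 1/2`. -/
def NonclassicalEig (q s c : ℂ) : Prop := ∃ t : ℤ, Odd t ∧ c = qnumP q s t

/-- A representation of the classical type: all eigenvalues of all the operators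
`T(I_{2i,2i-1})` (the generators with even index) are of the classical type. -/
def ClassicalType (q s : ℂ) {n : ℕ} {V : Type} [AddCommGroup V] [Module ℂ V]
    (T : Alg q n →ₐ[ℂ] Module.End ℂ V) : Prop :=
  ∀ g : Fin (n - 1), (g : ℕ) % 2 = 0 →
    ∀ c : ℂ, HasEig (T (gen q n g)) c → ClassicalEig q s c

/-- A representation of the nonclassical type. -/
def NonclassicalType (q s : ℂ) {n : ℕ} {V : Type} [AddCommGroup V] [Module ℂ V]
    (T : Alg q n →ₐ[ℂ] Module.End ℂ V) : Prop :=
  ∀ g : Fin (n - 1), (g : ℕ) % 2 = 0 →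
    ∀ c : ℂ, HasEig (T (gen q n g)) c → NonclassicalEig q s c

/-- Assumption(N): every finite-dimensional representation of `U'_q(so_N)` is completely
reducible, and every irreducible one is equivalent to a classical-type or a
nonclassical-type representation. -/
def Assumption (q s : ℂ) (N : ℕ) : Prop :=
  (∀ R : Rep q N, CompRed R.T) ∧
  ∀ R : Rep q N, Irr R.T →
    (∃ m : Fin (N / 2) → ℤ, ClassicalWeight N m ∧ IsClassicalModel q s R.T m) ∨
    (∃ (ε : Fin (N - 1) → ℂ) (m : Fin (N / 2) → ℤ),
      IsSign ε ∧ NonclassicalWeight N m ∧ IsNonclassicalModel q s R.T ε m)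

end UqSO

namespace UqSO

/-!
The generator `I_{21}` lies in `U'_q(so_{n-1})`, and in every Gel'fand–Tsetlin model it acts
diagonally, with eigenvalues `i[m]` on classical-type and `±[m]₊` on nonclassical-type
representations; as `q` is not a root of unity these two sets of numbers are disjoint. Hence
the sum `V_c` of the classical-type summands of the restriction is exactly the sum of the
eigenspaces of `T(I_{21})` for classical eigenvalues. The first description shows that `V_c`
is invariant under `U'_q(so_{n-1})`, the second that it is invariant under `I_{n,n-1}`, which
commutes with `I_{21}` since `n ≥ 4`. By irreducibility `V_c` is `0` or everything.
-/

open Module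

section QNumbers

variable {q s : ℂ}

lemma zpow_ne_neg_one (hroot : ∀ k : ℕ, 0 < k → q ^ k ≠ 1) (k : ℤ) : q ^ k ≠ -1 := by
  intro h
  have hsq : q ^ (2 * k) = 1 := by rw [mul_comm, zpow_mul, h]; norm_num
  obtain ⟨m, rfl | rfl⟩ := Int.eq_nat_or_neg k
  · rcases Nat.eq_zero_or_pos m with rfl | hm
    · norm_num at h
    · exact hroot (2 * m) (by omega) (by exact_mod_cast hsq)
  · rcases Nat.eq_zero_or_pos m with rfl | hm
    · norm_num at h
    · refine hroot (2 * m) (by omega) ?_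
      rw [mul_neg, zpow_neg, inv_eq_one] at hsq
      exact_mod_cast hsq

lemma sub_inv_ne_zero (hq : q ≠ 0) (hroot : ∀ k : ℕ, 0 < k → q ^ k ≠ 1) : q - q⁻¹ ≠ 0 := by
  intro h
  refine hroot 2 two_pos ?_
  field_simp at h
  linear_combination h

lemma zpow_sq_of_sq_eq (hs : s ^ 2 = q) (k : ℤ) : (s ^ k) ^ 2 = q ^ k := by
  rw [← hs, ← zpow_natCast, ← zpow_natCast, ← zpow_mul, ← zpow_mul, mul_comm]

-- Equality `ε[t/2]₊ = i[t'/2]` would force `q ^ (t' - t) = -1` or `q ^ (t' + t) = -1`.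
lemma not_classicalEig_mul_qnumP (hq : q ≠ 0) (hs : s ^ 2 = q)
    (hroot : ∀ k : ℕ, 0 < k → q ^ k ≠ 1) {ε : ℂ} (hε : ε = 1 ∨ ε = -1) (t : ℤ) :
    ¬ ClassicalEig q s (ε * qnumP q s t) := by
  rintro ⟨t', h⟩
  have hs0 : s ≠ 0 := by rintro rfl; exact hq (by rw [← hs]; ring)
  have hε2 : ε ^ 2 = 1 := by rcases hε with rfl | rfl <;> norm_num
  set X := s ^ t'
  set Y := s ^ t
  have hY : Y ≠ 0 := zpow_ne_zero _ hs0
  have hXY : ε * (X * Y ^ 2 + X) = Complex.I * (X ^ 2 * Y - Y) := by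
    simp only [qnum, qnumP, zpow_neg, mul_div_assoc'] at h
    rw [div_left_inj' (sub_inv_ne_zero hq hroot)] at h
    field_simp at h
    linear_combination h
  have hfac : (X + Complex.I * ε * Y) * (1 - Complex.I * ε * X * Y) = 0 := by
    linear_combination ε * hXY - X * hε2 - ε ^ 2 * X * Y ^ 2 * Complex.I_sq
  rcases mul_eq_zero.mp hfac with h0 | h0
  · refine zpow_ne_neg_one hroot (t' - t) ?_
    rw [← zpow_sq_of_sq_eq hs, zpow_sub₀ hs0, div_pow, eq_neg_iff_add_eq_zero]
    field_simp
    linear_combination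
      (X - Complex.I * ε * Y) * h0 + Y ^ 2 * ε ^ 2 * Complex.I_sq - Y ^ 2 * hε2
  · refine zpow_ne_neg_one hroot (t' + t) ?_
    rw [← zpow_sq_of_sq_eq hs, zpow_add₀ hs0]
    linear_combination (1 + Complex.I * ε * X * Y) * h0 +
      (X * Y) ^ 2 * ε ^ 2 * Complex.I_sq - (X * Y) ^ 2 * hε2

end QNumbers

section Eigenspaces

variable {R V : Type*} [CommRing R] [AddCommGroup V] [Module R V]

lemma _root_.Submodule.biSup_le_comap_biSup {ι : Type*} {f : V →ₗ[R] V} {p : ι → Submodule R V}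
    {S : Set ι} (h : ∀ i ∈ S, p i ≤ (p i).comap f) :
    ⨆ i ∈ S, p i ≤ (⨆ i ∈ S, p i).comap f :=
  iSup₂_le fun i hi => (h i hi).trans (Submodule.comap_mono (le_biSup p hi))

lemma le_biSup_eigenspace_of_linearEquiv {β : Type*} {f : End R V} {W : Submodule R V}
    (e : W ≃ₗ[R] (β →₀ R)) (D : (β →₀ R) →ₗ[R] (β →₀ R))
    (he : ∀ w : W, f w = e.symm (D (e w))) {S : Set R}
    (hD : ∀ b, ∃ c ∈ S, D (Finsupp.single b 1) = c • Finsupp.single b 1) :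
    W ≤ ⨆ c ∈ S, f.eigenspace c := by
  let basis := Finsupp.basisSingleOne.map e.symm
  rw [← W.map_subtype_top, ← basis.span_eq, Submodule.map_span, Submodule.span_le]
  rintro _ ⟨_, ⟨b, rfl⟩, rfl⟩
  obtain ⟨c, hc, hDb⟩ := hD b
  refine le_biSup (fun c => f.eigenspace c) hc (Module.End.mem_eigenspace_iff.mpr ?_)
  simp only [basis, Basis.map_apply, Finsupp.coe_basisSingleOne, Submodule.subtype_apply]
  rw [he, e.apply_symm_apply, hDb, map_smul, Submodule.coe_smul]

end Eigenspaces

section Algebra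

variable {q : ℂ} {n : ℕ} {V : Type} [AddCommGroup V] [Module ℂ V]

lemma incl_gen {m : ℕ} (h : m ≤ n) (i : Fin (m - 1)) :
    incl q h (gen q m i) = gen q n (Fin.castLE (Nat.sub_le_sub_right h 1) i) := by
  rw [incl, gen, gen, RingQuot.liftAlgHom_mkAlgHom_apply]
  simp

lemma commute_gen_gen (i j : Fin (n - 1)) (h : (i : ℕ) + 1 < j) :
    Commute (gen q n i) (gen q n j) := by
  show _ * _ = _ * _
  simpa [gen, map_mul] using RingQuot.mkAlgHom_rel ℂ (Rel.relFar (q := q) (n := n) i j h)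

lemma invariant_of_forall_gen (T : Alg q n →ₐ[ℂ] End ℂ V) {W : Submodule ℂ V}
    (h : ∀ g, W ≤ W.comap (T (gen q n g))) : Invariant T W := by
  intro a
  obtain ⟨x, rfl⟩ := RingQuot.mkAlgHom_surjective ℂ (Rel q n) a
  induction x using FreeAlgebra.induction with
  | grade0 r =>
    intro v hv
    rw [AlgHom.commutes, AlgHom.commutes, Module.algebraMap_end_apply]
    exact W.smul_mem r hv
  | grade1 i => exact fun v hv => h i hv
  | mul a b ha hb =>
    intro v hv
    rw [map_mul, map_mul, Module.End.mul_apply]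
    exact ha _ (hb v hv)
  | add a b ha hb =>
    intro v hv
    rw [map_add, map_add, LinearMap.add_apply]
    exact W.add_mem (ha v hv) (hb v hv)

lemma IsIrredSub.irr_subRep {T : Alg q n →ₐ[ℂ] End ℂ V} {W : Submodule ℂ V}
    (h : IsIrredSub T W) : Irr (subRep T W h.1) := by
  intro U hU
  have hmap : Invariant T (U.map W.subtype) := by
    rintro a _ ⟨u, hu, rfl⟩
    exact ⟨subRep T W h.1 a u, hU a u hu, rfl⟩
  have hinj := Submodule.map_injective_of_injective W.injective_subtype
  rcases h.2.2 _ (Submodule.map_subtype_le W U) hmap with h0 | h1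
  · exact Or.inl (hinj (by rw [h0, Submodule.map_bot]))
  · exact Or.inr (hinj (by rw [h1, Submodule.map_subtype_top]))

end Algebra

section Models

variable {q s : ℂ} {N : ℕ} {V : Type} [AddCommGroup V] [Module ℂ V]

lemma classicalOp_single_of_val_eq_zero (m : Fin (N / 2) → ℤ) {g : Fin (N - 1)}
    (hg : (g : ℕ) = 0) (α : GTc N m) :
    classicalOp q s N m g (Finsupp.single α 1) =
      (Complex.I * qnum q s (lc α.1 2 0)) • Finsupp.single α 1 := by
  simp [classicalOp, hg, actEvenC, Ccoef]

lemma nonclassicalOp_single_of_val_eq_zero (ε : Fin (N - 1) → ℂ) (m : Fin (N / 2) → ℤ)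
    {g : Fin (N - 1)} (hg : (g : ℕ) = 0) (α : GTn N m) :
    nonclassicalOp q s N ε m g (Finsupp.single α 1) =
      (ε g * qnumP q s (lc α.1 2 0)) • Finsupp.single α 1 := by
  simp [nonclassicalOp, hg, actEvenN, ChatCoef]

lemma IsClassicalModel.le_biSup_eigenspace {T : Alg q N →ₐ[ℂ] End ℂ V} {W : Submodule ℂ V}
    {hW : Invariant T W} {m : Fin (N / 2) → ℤ} (h : IsClassicalModel q s (subRep T W hW) m)
    {g : Fin (N - 1)} (hg : (g : ℕ) = 0) :
    W ≤ ⨆ c ∈ {c | ClassicalEig q s c}, (T (gen q N g)).eigenspace c := by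
  obtain ⟨e, he⟩ := h
  refine le_biSup_eigenspace_of_linearEquiv e (classicalOp q s N m g) (fun w => ?_)
    fun α => ⟨_, ⟨_, rfl⟩, classicalOp_single_of_val_eq_zero m hg α⟩
  rw [← he, e.symm_apply_apply]
  rfl

lemma IsNonclassicalModel.le_biSup_eigenspace (hq : q ≠ 0) (hs : s ^ 2 = q)
    (hroot : ∀ k : ℕ, 0 < k → q ^ k ≠ 1) {T : Alg q N →ₐ[ℂ] End ℂ V} {W : Submodule ℂ V}
    {hW : Invariant T W} {ε : Fin (N - 1) → ℂ} {m : Fin (N / 2) → ℤ} (hε : IsSign ε)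
    (h : IsNonclassicalModel q s (subRep T W hW) ε m) {g : Fin (N - 1)} (hg : (g : ℕ) = 0) :
    W ≤ ⨆ c ∈ {c | ClassicalEig q s c}ᶜ, (T (gen q N g)).eigenspace c := by
  obtain ⟨e, he⟩ := h
  refine le_biSup_eigenspace_of_linearEquiv e (nonclassicalOp q s N ε m g) (fun w => ?_)
    fun α => ⟨_, not_classicalEig_mul_qnumP hq hs hroot (hε g) _,
      nonclassicalOp_single_of_val_eq_zero ε m hg α⟩
  rw [← he, e.symm_apply_apply]
  rfl

lemma Assumption.isClassicalModel_or_isNonclassicalModel {N : ℕ} (hA : Assumption q s N)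
    [FiniteDimensional ℂ V]
    {T : Alg q N →ₐ[ℂ] End ℂ V} {W : Submodule ℂ V} (h : IsIrredSub T W) :
    (∃ m, ClassicalWeight N m ∧ IsClassicalModel q s (subRep T W h.1) m) ∨
      ∃ ε m, IsSign ε ∧ NonclassicalWeight N m ∧
        IsNonclassicalModel q s (subRep T W h.1) ε m :=
  have : Nontrivial W := Submodule.nontrivial_iff_ne_bot.mpr h.2.1
  hA.2 ⟨W, subRep T W h.1⟩ h.irr_subRep

end Models

lemma invariant_biSup_of_le_biSup_eigenspace {q : ℂ} {n : ℕ} (hn : 4 ≤ n) {V : Type}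
    [AddCommGroup V] [Module ℂ V] (T : Alg q n →ₐ[ℂ] End ℂ V) {ι : Type}
    {W : ι → Submodule ℂ V} (hW : ∀ i, Invariant (T.comp (incl q (Nat.sub_le n 1))) (W i))
    (htop : ⨆ i, W i = ⊤) {I : Set ι} {S : Set ℂ}
    (hI : ∀ i ∈ I, W i ≤ ⨆ c ∈ S,
      (T (incl q (Nat.sub_le n 1) (gen q (n - 1) ⟨0, by omega⟩))).eigenspace c)
    (hIc : ∀ i ∉ I, W i ≤ ⨆ c ∈ Sᶜ,
      (T (incl q (Nat.sub_le n 1) (gen q (n - 1) ⟨0, by omega⟩))).eigenspace c) :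
    Invariant T (⨆ i ∈ I, W i) := by
  have h0 : incl q (Nat.sub_le n 1) (gen q (n - 1) ⟨0, by omega⟩) = gen q n ⟨0, by omega⟩ :=
    incl_gen _ _
  rw [h0] at hI hIc
  set A := T (gen q n ⟨0, by omega⟩)
  have hcodisj : Codisjoint (⨆ i ∈ I, W i) (⨆ i ∈ Iᶜ, W i) := by
    rw [codisjoint_iff, ← htop]
    exact (iSup_split W (· ∈ I)).symm
  have hdisj : Disjoint (⨆ i ∈ Iᶜ, W i) (⨆ c ∈ S, A.eigenspace c) :=
    ((A.eigenspaces_iSupIndep.disjoint_biSup_biSup disjoint_compl_right).symm).mono_left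
      (iSup₂_le hIc)
  have heq : ⨆ i ∈ I, W i = ⨆ c ∈ S, A.eigenspace c :=
    (le_iff_eq_of_codisjoint_of_disjoint hcodisj hdisj).mp (iSup₂_le hI)
  refine invariant_of_forall_gen T fun g => ?_
  by_cases hg : (g : ℕ) < n - 2
  · have hg' : gen q n g = incl q (Nat.sub_le n 1) (gen q (n - 1) ⟨g, by omega⟩) := by
      rw [incl_gen]; rfl
    rw [hg']
    exact Submodule.biSup_le_comap_biSup fun i _ v hv => hW i _ v hv
  · have hcomm : Commute A (T (gen q n g)) :=
      (commute_gen_gen _ _ (show 0 + 1 < (g : ℕ) by omega)).map T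
    rw [heq]
    exact Submodule.biSup_le_comap_biSup fun c _ =>
      Module.End.mapsTo_genEigenspace_of_comm hcomm c 1

/-- **Proposition 3.** Let `n ≥ 4` and suppose Assumption(n-1) holds.  The restriction
of an irreducible finite-dimensional representation of `U'_q(so_n)` to
`U'_q(so_{n-1})` is completely reducible and, in its decomposition into irreducible
subrepresentations, either every summand is of classical type or every summand is of
nonclassical type. -/
theorem restriction_completely_reducible_one_type (q s : ℂ) (hq : q ≠ 0) (hs : s ^ 2 = q)
    (hroot : ∀ k : ℕ, 0 < k → q ^ k ≠ 1) (n : ℕ) (hn : 4 ≤ n)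
    (hA : Assumption q s (n - 1)) (R : Rep q n) (hirr : Irr R.T) :
    CompRed (R.res (Nat.sub_le n 1)) ∧
    ∀ (ι : Type) (W : ι → Submodule ℂ R.V)
      (hD : IsDecomp (R.res (Nat.sub_le n 1)) W),
      (∀ i, ∃ m : Fin ((n - 1) / 2) → ℤ, ClassicalWeight (n - 1) m ∧
        IsClassicalModel q s (subRep (R.res (Nat.sub_le n 1)) (W i) (hD.1 i).1) m) ∨
      (∀ i, ∃ (ε : Fin (n - 1 - 1) → ℂ) (m : Fin ((n - 1) / 2) → ℤ),
        IsSign ε ∧ NonclassicalWeight (n - 1) m ∧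
          IsNonclassicalModel q s (subRep (R.res (Nat.sub_le n 1)) (W i) (hD.1 i).1) ε m) := by
  refine ⟨hA.1 ⟨R.V, R.res (Nat.sub_le n 1)⟩, fun ι W hD => ?_⟩
  let I : Set ι := {i | ∃ m, ClassicalWeight (n - 1) m ∧
    IsClassicalModel q s (subRep (R.res (Nat.sub_le n 1)) (W i) (hD.1 i).1) m}
  have hnonclassical (i) (hi : i ∉ I) :=
    (hA.isClassicalModel_or_isNonclassicalModel (hD.1 i)).resolve_left hi
  have hinv : Invariant R.T (⨆ i ∈ I, W i) :=
    invariant_biSup_of_le_biSup_eigenspace hn R.T (fun i => (hD.1 i).1) hD.2.2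
      (fun i ⟨_, _, h⟩ => h.le_biSup_eigenspace rfl) fun i hi => by
        obtain ⟨_, _, hε, _, h⟩ := hnonclassical i hi
        exact h.le_biSup_eigenspace hq hs hroot hε rfl
  rcases hirr _ hinv with hbot | htop
  · refine Or.inr fun i => hnonclassical i fun hi => (hD.1 i).2.1 (le_bot_iff.mp ?_)
    exact hbot ▸ le_biSup W hi
  · refine Or.inl fun i => by_contra fun hi : i ∉ I => (hD.1 i).2.1 ?_
    simpa [htop] using hD.2.1.disjoint_biSup hi

end UqSO
end
end

section
/- Let p ≥ 2. Let l_1, …, l_p be half-integers such that the 2p complex numbers [l_1]_+^2, …, [l_p]_+^2, [l_1-1]_+^2, …, [l_p-1]_+^2 are pairwise distinct and nonzero, and let L_1, …, L_{p+1} be half-integers. Define β(x) = Π_{r=1}^{p+1} ([x]_+^2 - [L_r]_+^2), c_i(x) = Π_{r≠i} ([l_r]_+^2 - [x]_+^2)([l_r-1]_+^2 - [x]_+^2), and σ = Π_{r=1}^{p+1} [L_r]_+. Then β(x) = Π_{r=1}^{p+1} ([x]^2 - [L_r]^2) for every half-integer x, and: (i) Σ_{i=1}^p (1/[2l_i-1])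 ( β(l_i)/([l_i]_+^2 c_i(l_i)) - β(l_i-1)/([l_i-1]_+^2 c_i(l_i-1)) ) = (-1)^{p} σ^2 / ( Π_{r=1}^p [l_r]_+^2 [l_r-1]_+^2 ); (ii) Σ_{i=1}^p (1/[2l_i-1]) ( [l_i]_+^{2ν} β(l_i)/c_i(l_i) - [l_i-1]_+^{2ν} β(l_i-1)/c_i(l_i-1) ) = 0 for every ν = 0, 1, …, p-3; (iii) Σ_{i=1}^p (1/[2l_i-1]) ( [l_i]_+^{2p-4} β(l_i)/c_i(l_i) - [l_i-1]_+^{2p-4} β(l_i-1)/c_i(l_i-1) ) = 1. -/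
/-!
Write `u i = [l_i]₊²` and `v i = [l_i - 1]₊²`. Since `[a]₊² - [b]₊² = [a + b] [a - b]` and
`[1] = 1`, we get `u i - v i = [2 l_i - 1]`, and `(u i - v i) c_i(l_i)` and `-(u i - v i) c_i(l_i - 1)`
are the products `∏ (y - y')` of the node `y = u i`, resp. `y = v i`, against the other nodes `y'`
among the `2p` distinct values `u j, v j`. So each left-hand side is a Lagrange sum
`∑_y g(y) / ∏_{y' ≠ y} (y - y')`, which is the coefficient of `X^(2p-1)` of `g` whenever
`deg g < 2p`. For (ii) and (iii) take `g = X^ν β`, where `β = ∏_r (X - [L_r]₊²)` is monic of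
degree `p + 1`. For (i) add the node `0`: the Lagrange sum of `β` over the `2p + 1` nodes vanishes,
and its terms at the nonzero nodes form the left-hand side of (i), so that side is determined by
`β(0)`. The first identity holds because `[x]₊² - [x]²` does not depend on `x`.
-/

noncomputable section

open Finset

namespace UqSO

/-- `β(x) = ∏_{r=1}^{p+1} ([x]₊² - [L_r]₊²)` (doubled arguments). -/
def betaP (q s : ℂ) {p : ℕ} (L : Fin (p + 1) → ℤ) (x : ℤ) : ℂ :=
  ∏ r, (qnumP q s x ^ 2 - qnumP q s (L r) ^ 2)

/-- `c_i(x) = ∏_{r≠i} ([l_r]₊² - [x]₊²)([l_r - 1]₊² - [x]₊²)` (doubled arguments). -/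
def cP (q s : ℂ) {p : ℕ} (l : Fin p → ℤ) (i : Fin p) (x : ℤ) : ℂ :=
  ∏ r ∈ Finset.univ.erase i,
    (qnumP q s (l r) ^ 2 - qnumP q s x ^ 2) * (qnumP q s (l r - 2) ^ 2 - qnumP q s x ^ 2)

end UqSO

open Polynomial

section NodeSums

variable {ι κ M : Type*} [Fintype ι] [Fintype κ] [DecidableEq ι] [DecidableEq κ] [CommMonoid M]

theorem Finset.prod_univ_erase_inl (f : ι ⊕ κ → M) (i : ι) :
    ∏ x ∈ univ.erase (Sum.inl i), f x = (∏ a ∈ univ.erase i, f (.inl a)) * ∏ b, f (.inr b) := by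
  rw [prod_sum_eq_prod_toLeft_mul_prod_toRight]
  congr 2 <;> ext <;> simp

theorem Finset.prod_univ_erase_inr (f : ι ⊕ κ → M) (j : κ) :
    ∏ x ∈ univ.erase (Sum.inr j), f x = (∏ a, f (.inl a)) * ∏ b ∈ univ.erase j, f (.inr b) := by
  rw [prod_sum_eq_prod_toLeft_mul_prod_toRight]
  congr 2 <;> ext <;> simp

theorem Finset.prod_univ_erase_none (f : Option κ → M) :
    ∏ x ∈ univ.erase none, f x = ∏ a, f (some a) := by
  have : univ.erase none = (univ : Finset κ).map .some := by
    ext (_ | _) <;> simp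
  rw [this, prod_map]
  rfl

theorem Finset.prod_univ_erase_some (f : Option κ → M) (k : κ) :
    ∏ x ∈ univ.erase (some k), f x = f none * ∏ a ∈ univ.erase k, f (some a) := by
  have : univ.erase (some k) = insert none ((univ.erase k).map .some) := by
    ext (_ | _) <;> simp
  rw [this, prod_insert (by simp), prod_map]
  rfl

variable {F : Type*} [Field F]

def pairNodal (u v : ι → F) (i : ι) (x : F) : F :=
  ∏ r ∈ univ.erase i, (u r - x) * (v r - x)

theorem prod_erase_inl_sub_sumElim (u v : ι → F) (i : ι) :
    ∏ k ∈ univ.erase (.inl i), (u i - Sum.elim u v k) = (u i - v i) * pairNodal u v i (u i) := by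
  rw [prod_univ_erase_inl]
  simp only [Sum.elim_inl, Sum.elim_inr]
  rw [pairNodal, ← mul_prod_erase univ (fun r => u i - v r) (mem_univ i), mul_left_comm,
    ← prod_mul_distrib]
  exact congrArg _ (prod_congr rfl fun r _ => by ring)

theorem prod_erase_inr_sub_sumElim (u v : ι → F) (i : ι) :
    ∏ k ∈ univ.erase (.inr i), (v i - Sum.elim u v k) = -((u i - v i) * pairNodal u v i (v i)) := by
  rw [prod_univ_erase_inr]
  simp only [Sum.elim_inl, Sum.elim_inr]
  rw [pairNodal, ← mul_prod_erase univ (fun r => v i - u r) (mem_univ i), mul_assoc,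
    ← prod_mul_distrib, ← neg_mul, neg_sub]
  exact congrArg _ (prod_congr rfl fun r _ => by ring)

theorem sum_sumElim_div_prod_erase_sub (u v : ι → F) (φ : F → F) :
    ∑ k, φ (Sum.elim u v k) / ∏ j ∈ univ.erase k, (Sum.elim u v k - Sum.elim u v j) =
      ∑ i, (u i - v i)⁻¹ * (φ (u i) / pairNodal u v i (u i) - φ (v i) / pairNodal u v i (v i)) := by
  rw [Fintype.sum_sum_type, ← sum_add_distrib]
  refine sum_congr rfl fun i _ => ?_
  simp only [Sum.elim_inl, Sum.elim_inr]
  rw [prod_erase_inl_sub_sumElim, prod_erase_inr_sub_sumElim]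
  simp only [div_eq_mul_inv, mul_inv, inv_neg]
  ring

theorem sum_div_pairNodal_eq_coeff (u v : ι → F) (huv : Function.Injective (Sum.elim u v))
    {g : F[X]} (hg : g.degree < 2 * Fintype.card ι) :
    ∑ i, (u i - v i)⁻¹ *
        (g.eval (u i) / pairNodal u v i (u i) - g.eval (v i) / pairNodal u v i (v i)) =
      g.coeff (2 * Fintype.card ι - 1) := by
  have hcard : #(univ : Finset (ι ⊕ ι)) = 2 * Fintype.card ι := by simp [two_mul]
  rw [← sum_sumElim_div_prod_erase_sub u v g.eval, ← hcard,
    Lagrange.coeff_eq_sum huv.injOn (by rwa [hcard])]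

theorem coeff_card_eq_eval_zero_div_add_sum (w : κ → F) (hw : Function.Injective w)
    (hw0 : ∀ k, w k ≠ 0) {g : F[X]} (hg : g.degree < Fintype.card κ + 1) :
    g.coeff (Fintype.card κ) =
      g.eval 0 / ∏ k, -w k + ∑ k, g.eval (w k) / w k / ∏ j ∈ univ.erase k, (w k - w j) := by
  set w' : Option κ → F := fun o => o.elim 0 w
  have hw' : Function.Injective w' := by
    rintro (_ | a) (_ | b) h
    exacts [rfl, absurd h.symm (hw0 b), absurd h (hw0 a), congrArg _ (hw h)]
  have hcard : #(univ : Finset (Option κ)) = Fintype.card κ + 1 := by simp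
  have h := Lagrange.coeff_eq_sum (s := univ) hw'.injOn (P := g) (by rw [hcard]; exact_mod_cast hg)
  rw [hcard, Nat.add_sub_cancel] at h
  rw [h, Fintype.sum_option, prod_univ_erase_none]
  congr 1
  · simp [w']
  · refine sum_congr rfl fun k _ => ?_
    rw [prod_univ_erase_some, div_div]
    simp [w']

theorem sum_div_mul_pairNodal_eq_coeff (u v : ι → F) (huv : Function.Injective (Sum.elim u v))
    (hu : ∀ i, u i ≠ 0) (hv : ∀ i, v i ≠ 0) {g : F[X]} (hg : g.degree < 2 * Fintype.card ι + 1) :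
    ∑ i, (u i - v i)⁻¹ * (g.eval (u i) / (u i * pairNodal u v i (u i)) -
        g.eval (v i) / (v i * pairNodal u v i (v i))) =
      g.coeff (2 * Fintype.card ι) - g.eval 0 / ∏ i, u i * v i := by
  have hcard : Fintype.card (ι ⊕ ι) = 2 * Fintype.card ι := by simp [two_mul]
  have hw0 : ∀ k, Sum.elim u v k ≠ 0 := by rintro (i | i) <;> simp [hu, hv]
  have hprod : ∏ k, -Sum.elim u v k = ∏ i, u i * v i := by
    rw [Fintype.prod_sum_type, ← prod_mul_distrib]
    simp
  rw [← hcard, coeff_card_eq_eval_zero_div_add_sum _ huv hw0 (by rwa [hcard]), hprod,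
    add_sub_cancel_left]
  simpa only [div_div] using (sum_sumElim_div_prod_erase_sub u v (fun x => g.eval x / x)).symm

end NodeSums

namespace UqSO

variable {q s : ℂ}

theorem qnumP_sq_sub_qnum_sq (hs : s ≠ 0) (t : ℤ) :
    qnumP q s t ^ 2 - qnum q s t ^ 2 = 4 / (q - q⁻¹) ^ 2 := by
  have h : s ^ t * s ^ (-t) = 1 := by rw [zpow_neg, mul_inv_cancel₀ (zpow_ne_zero _ hs)]
  rw [qnumP, qnum, div_pow, div_pow, ← sub_div]
  congr 1
  linear_combination 4 * h

theorem qnumP_sq_sub_qnumP_sq (hs : s ≠ 0) (a b : ℤ) :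
    qnumP q s a ^ 2 - qnumP q s b ^ 2 = qnum q s (a + b) * qnum q s (a - b) := by
  rw [qnumP, qnumP, qnum, qnum, div_pow, div_pow, ← sub_div, div_mul_div_comm, ← pow_two]
  congr 1
  have ha : s ^ a * (s ^ a)⁻¹ = 1 := mul_inv_cancel₀ (zpow_ne_zero a hs)
  have hb : s ^ b * (s ^ b)⁻¹ = 1 := mul_inv_cancel₀ (zpow_ne_zero b hs)
  simp only [zpow_add₀ hs, zpow_sub₀ hs, zpow_neg, neg_add, div_eq_mul_inv, mul_inv, inv_inv]
  linear_combination (2 + (s ^ b) ^ 2 + ((s ^ b)⁻¹) ^ 2) * ha -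
    (2 + (s ^ a) ^ 2 + ((s ^ a)⁻¹) ^ 2) * hb

theorem qnum_two (hs : s ^ 2 = q) (hq : q - q⁻¹ ≠ 0) : qnum q s 2 = 1 := by
  rw [qnum, div_eq_one_iff_eq hq, zpow_neg, ← hs]
  norm_cast

theorem qnumP_sq_sub_qnumP_sub_two_sq (hs : s ^ 2 = q) (hq : q - q⁻¹ ≠ 0) (x : ℤ) :
    qnumP q s x ^ 2 - qnumP q s (x - 2) ^ 2 = qnum q s (2 * x - 2) := by
  have hs0 : s ≠ 0 := by rintro rfl; simp [← hs] at hq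
  rw [qnumP_sq_sub_qnumP_sq hs0, show x - (x - 2) = 2 by ring, qnum_two hs hq, mul_one]
  ring_nf

theorem betaP_eq_prod_qnum_sq (hs : s ≠ 0) {p : ℕ} (L : Fin (p + 1) → ℤ) (x : ℤ) :
    betaP q s L x = ∏ r, (qnum q s x ^ 2 - qnum q s (L r) ^ 2) := by
  refine prod_congr rfl fun r _ => ?_
  linear_combination qnumP_sq_sub_qnum_sq (q := q) hs x - qnumP_sq_sub_qnum_sq (q := q) hs (L r)

def betaPoly (q s : ℂ) {p : ℕ} (L : Fin (p + 1) → ℤ) : ℂ[X] :=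
  ∏ r, (X - C (qnumP q s (L r) ^ 2))

variable {p : ℕ}

theorem betaP_eq_eval_betaPoly (L : Fin (p + 1) → ℤ) (x : ℤ) :
    betaP q s L x = (betaPoly q s L).eval (qnumP q s x ^ 2) := by
  simp [betaP, betaPoly, eval_prod]

theorem monic_betaPoly (L : Fin (p + 1) → ℤ) : (betaPoly q s L).Monic :=
  monic_prod_of_monic _ _ fun _ _ => monic_X_sub_C _

theorem natDegree_betaPoly (L : Fin (p + 1) → ℤ) : (betaPoly q s L).natDegree = p + 1 := by
  rw [betaPoly, natDegree_finsetProd_X_sub_C_eq_card, card_univ, Fintype.card_fin]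

theorem natDegree_X_pow_mul_betaPoly (L : Fin (p + 1) → ℤ) (m : ℕ) :
    (X ^ m * betaPoly q s L).natDegree = m + (p + 1) := by
  rw [(monic_X_pow m).natDegree_mul (monic_betaPoly L), natDegree_X_pow, natDegree_betaPoly]

theorem eval_zero_betaPoly (L : Fin (p + 1) → ℤ) :
    (betaPoly q s L).eval 0 = (-1) ^ (p + 1) * (∏ r, qnumP q s (L r)) ^ 2 := by
  simp [betaPoly, eval_prod, prod_neg, ← prod_pow]

theorem cP_eq_pairNodal (l : Fin p → ℤ) (i : Fin p) (x : ℤ) :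
    cP q s l i x = pairNodal (fun r => qnumP q s (l r) ^ 2) (fun r => qnumP q s (l r - 2) ^ 2) i
      (qnumP q s x ^ 2) :=
  rfl

theorem sum_qnumP_pow_mul_betaP_div_cP (hs : s ^ 2 = q) (hq : q - q⁻¹ ≠ 0) {l : Fin p → ℤ}
    (L : Fin (p + 1) → ℤ) (hdist : Function.Injective
      (Sum.elim (fun i => qnumP q s (l i) ^ 2) (fun i => qnumP q s (l i - 2) ^ 2)))
    {m : ℕ} (hm : m + 2 ≤ p) :
    ∑ i, (1 / qnum q s (2 * l i - 2)) *
        (qnumP q s (l i) ^ (2 * m) * betaP q s L (l i) / cP q s l i (l i) -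
          qnumP q s (l i - 2) ^ (2 * m) * betaP q s L (l i - 2) / cP q s l i (l i - 2)) =
      (X ^ m * betaPoly q s L).coeff (2 * p - 1) := by
  have h := sum_div_pairNodal_eq_coeff _ _ hdist (g := X ^ m * betaPoly q s L) (by
    rw [degree_eq_natDegree ((monic_X_pow m).mul (monic_betaPoly L)).ne_zero,
      natDegree_X_pow_mul_betaPoly, Fintype.card_fin]
    exact_mod_cast (by omega : m + (p + 1) < 2 * p))
  rw [Fintype.card_fin] at h
  rw [← h]
  refine sum_congr rfl fun i _ => ?_
  rw [one_div, ← qnumP_sq_sub_qnumP_sub_two_sq hs hq, betaP_eq_eval_betaPoly,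
    betaP_eq_eval_betaPoly, cP_eq_pairNodal, cP_eq_pairNodal]
  simp only [eval_mul, eval_pow, eval_X, pow_mul]

theorem sum_betaP_div_qnumP_sq_mul_cP (hs : s ^ 2 = q) (hq : q - q⁻¹ ≠ 0) {l : Fin p → ℤ}
    (L : Fin (p + 1) → ℤ) (hdist : Function.Injective
      (Sum.elim (fun i => qnumP q s (l i) ^ 2) (fun i => qnumP q s (l i - 2) ^ 2)))
    (hp : 2 ≤ p) (hne1 : ∀ i, qnumP q s (l i) ^ 2 ≠ 0)
    (hne2 : ∀ i, qnumP q s (l i - 2) ^ 2 ≠ 0) :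
    ∑ i, (1 / qnum q s (2 * l i - 2)) *
        (betaP q s L (l i) / (qnumP q s (l i) ^ 2 * cP q s l i (l i)) -
          betaP q s L (l i - 2) / (qnumP q s (l i - 2) ^ 2 * cP q s l i (l i - 2))) =
      (-1) ^ p * (∏ r, qnumP q s (L r)) ^ 2 /
        ∏ r, (qnumP q s (l r) ^ 2 * qnumP q s (l r - 2) ^ 2) := by
  have h := sum_div_mul_pairNodal_eq_coeff _ _ hdist hne1 hne2 (g := betaPoly q s L) (by
    rw [degree_eq_natDegree (monic_betaPoly L).ne_zero, natDegree_betaPoly, Fintype.card_fin]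
    exact_mod_cast (by omega : p + 1 < 2 * p + 1))
  rw [Fintype.card_fin, eval_zero_betaPoly,
    coeff_eq_zero_of_natDegree_lt (by rw [natDegree_betaPoly]; omega)] at h
  convert h using 1
  · refine sum_congr rfl fun i _ => ?_
    rw [one_div, ← qnumP_sq_sub_qnumP_sub_two_sq hs hq, betaP_eq_eval_betaPoly,
      betaP_eq_eval_betaPoly, cP_eq_pairNodal, cP_eq_pairNodal]
  · ring

/-- The system (68)–(70) of Iorgov–Klimyk (nonclassical case). -/
theorem nonclassical_reduced_matrix_identities (q s : ℂ) (hq : q ≠ 0) (hs : s ^ 2 = q)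
    (hroot : ∀ k : ℕ, 0 < k → q ^ k ≠ 1)
    (p : ℕ) (hp : 2 ≤ p) (l : Fin p → ℤ) (L : Fin (p + 1) → ℤ)
    (hdist : Function.Injective
      (Sum.elim (fun i : Fin p => qnumP q s (l i) ^ 2)
        (fun i : Fin p => qnumP q s (l i - 2) ^ 2)))
    (hne1 : ∀ i, qnumP q s (l i) ^ 2 ≠ 0) (hne2 : ∀ i, qnumP q s (l i - 2) ^ 2 ≠ 0) :
    (∀ x : ℤ, betaP q s L x = ∏ r, (qnum q s x ^ 2 - qnum q s (L r) ^ 2)) ∧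
    (∑ i, (1 / qnum q s (2 * l i - 2)) *
        (betaP q s L (l i) / (qnumP q s (l i) ^ 2 * cP q s l i (l i)) -
          betaP q s L (l i - 2) / (qnumP q s (l i - 2) ^ 2 * cP q s l i (l i - 2))) =
      (-1) ^ p * (∏ r, qnumP q s (L r)) ^ 2 /
        ∏ r, (qnumP q s (l r) ^ 2 * qnumP q s (l r - 2) ^ 2)) ∧
    (∀ ν : ℕ, ν + 3 ≤ p →
      ∑ i, (1 / qnum q s (2 * l i - 2)) *
        (qnumP q s (l i) ^ (2 * ν) * betaP q s L (l i) / cP q s l i (l i) -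
          qnumP q s (l i - 2) ^ (2 * ν) * betaP q s L (l i - 2) / cP q s l i (l i - 2)) = 0) ∧
    (∑ i, (1 / qnum q s (2 * l i - 2)) *
        (qnumP q s (l i) ^ (2 * p - 4) * betaP q s L (l i) / cP q s l i (l i) -
          qnumP q s (l i - 2) ^ (2 * p - 4) * betaP q s L (l i - 2) /
            cP q s l i (l i - 2)) = 1) := by
  have hq' : q - q⁻¹ ≠ 0 := by
    rw [sub_ne_zero, Ne, ← mul_eq_one_iff_eq_inv₀ hq, ← sq]
    exact hroot 2 two_pos
  have hs0 : s ≠ 0 := by rintro rfl; simp [← hs] at hq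
  refine ⟨betaP_eq_prod_qnum_sq hs0 L, sum_betaP_div_qnumP_sq_mul_cP hs hq' L hdist hp hne1 hne2,
    fun ν hν => ?_, ?_⟩
  · rw [sum_qnumP_pow_mul_betaP_div_cP hs hq' L hdist (by omega : ν + 2 ≤ p)]
    exact coeff_eq_zero_of_natDegree_lt (by rw [natDegree_X_pow_mul_betaPoly]; omega)
  · rw [show 2 * p - 4 = 2 * (p - 2) by omega,
      sum_qnumP_pow_mul_betaP_div_cP hs hq' L hdist (by omega : p - 2 + 2 ≤ p)]
    have hdeg := natDegree_X_pow_mul_betaPoly (q := q) (s := s) L (p - 2)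
    rw [show p - 2 + (p + 1) = 2 * p - 1 by omega] at hdeg
    rw [← hdeg]
    exact ((monic_X_pow _).mul (monic_betaPoly L)).coeff_natDegree

end UqSO
end
end
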